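/- Let G be a finite group with a Cayley set S consisting of a involutions and b non-involutions, let N ⊴ G and ρ: G → G/N the quotient map. Then ρ(S) \ {1} is a Cayley set of G/N consisting of a' involutions and b' non-involutions where b' ≤ b and 2a' ≤ 2a + (b - b'). -/

import Mathlib

/-!
Every nontrivial element `t` of `ρ(S)` lifts to some `s ∈ S`, and `orderOf t ∣ orderOf s`.
A non-involution `t` therefore lifts to a non-involution `s` whose image is not an involution,
so `b'` is at most the number `b - d` of such `s`, where `d` counts the non-involutions of `S`
mapped to involutions. An involution `t` lifts either to an involution of `S` or to one of
these `d` elements; the latter come in pairs `s ≠ s⁻¹` with the same image, so they contribute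
at most `d / 2` involutions, whence `2a' ≤ 2a + d ≤ 2a + (b - b')`.
-/

theorem Set.two_mul_ncard_image_le {α β : Type*} {s : Set α} (hs : s.Finite) (f : α → β)
    (h : ∀ x ∈ s, ∃ y ∈ s, y ≠ x ∧ f y = f x) : 2 * (f '' s).ncard ≤ s.ncard := by
  classical
  lift s to Finset α using hs
  rw [← Finset.coe_image, Set.ncard_coe_finset, Set.ncard_coe_finset]
  refine Finset.mul_card_image_le_card s 2 fun b hb => ?_
  obtain ⟨x, hx, rfl⟩ := Finset.mem_image.mp hb
  obtain ⟨y, hy, hyx, hfy⟩ := h x hx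
  exact Finset.one_lt_card.mpr ⟨y, by simp [Finset.mem_coe.mp hy, hfy], x, by simp [hx], hyx⟩

namespace MonoidHom

variable {G H : Type*} [Group G] [Group H] (f : G →* H) (S : Set G)

theorem orderOf_map_eq_two {g : G} (hg : orderOf g = 2) (hfg : f g ≠ 1) :
    orderOf (f g) = 2 := by
  exact orderOf_eq_prime (by rw [← map_pow, ← hg, pow_orderOf_eq_one, map_one]) hfg

def foldedNonInvolutions : Set G := {s ∈ S | orderOf s ≠ 2} ∩ {s | orderOf (f s) = 2}

theorem nonInvolutions_image_sdiff_one_subset :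
    {t ∈ f '' S \ {1} | orderOf t ≠ 2} ⊆
      f '' ({s ∈ S | orderOf s ≠ 2} \ {s | orderOf (f s) = 2}) := by
  rintro _ ⟨⟨⟨s, hs, rfl⟩, hs1⟩, hs2⟩
  exact ⟨s, ⟨⟨hs, fun h => hs2 (f.orderOf_map_eq_two h hs1)⟩, hs2⟩, rfl⟩

theorem involutions_image_sdiff_one_subset :
    {t ∈ f '' S \ {1} | orderOf t = 2} ⊆
      f '' {s ∈ S | orderOf s = 2} ∪ f '' foldedNonInvolutions f S := by
  rintro _ ⟨⟨⟨s, hs, rfl⟩, -⟩, hs2⟩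
  by_cases h : orderOf s = 2
  · exact Or.inl ⟨s, ⟨hs, h⟩, rfl⟩
  · exact Or.inr ⟨s, ⟨⟨hs, h⟩, hs2⟩, rfl⟩

theorem two_mul_ncard_image_foldedNonInvolutions_le (hS : S.Finite)
    (hinv : ∀ s ∈ S, s⁻¹ ∈ S) :
    2 * (f '' foldedNonInvolutions f S).ncard ≤ (foldedNonInvolutions f S).ncard := by
  refine Set.two_mul_ncard_image_le (hS.subset fun s hs => hs.1.1) f ?_
  rintro s ⟨⟨hs, hs2⟩, hfs2⟩
  have hs1 : s ≠ 1 := by rintro rfl; simp at hfs2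
  have hs_inv : s⁻¹ ≠ s := fun h =>
    hs2 (orderOf_eq_prime (by rw [sq]; nth_rw 1 [← h]; exact inv_mul_cancel s) hs1)
  have hfs_inv : f s⁻¹ = f s := by
    rw [map_inv, inv_eq_iff_mul_eq_one, ← sq, ← hfs2, pow_orderOf_eq_one]
  have hs_inv_mem : s⁻¹ ∈ foldedNonInvolutions f S :=
    ⟨⟨hinv s hs, by rwa [orderOf_inv]⟩, by rwa [Set.mem_ofPred_eq, hfs_inv]⟩
  exact ⟨s⁻¹, hs_inv_mem, hs_inv, hfs_inv⟩

theorem inv_mem_image_sdiff_one (hinv : ∀ s ∈ S, s⁻¹ ∈ S) :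
    ∀ t ∈ f '' S \ {1}, t⁻¹ ∈ f '' S \ {1} := by
  rintro _ ⟨⟨s, hs, rfl⟩, hs1⟩
  exact ⟨⟨s⁻¹, hinv s hs, map_inv f s⟩, by simpa using hs1⟩

end MonoidHom

theorem cayley_set_quotient_valency_general {G : Type*} [Group G] [Fintype G]
    (N : Subgroup G) [N.Normal] (S : Set G)
    (hinv : ∀ s ∈ S, s⁻¹ ∈ S)
    (hgen : Subgroup.closure S = ⊤)
    (a b : ℕ)
    (ha : a = {s ∈ S | orderOf s = 2}.ncard)
    (hb : b = {s ∈ S | orderOf s ≠ 2}.ncard) :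
    ∃ a' b' : ℕ,
      a' = {t ∈ (QuotientGroup.mk' N '' S) \ {1} | orderOf t = 2}.ncard ∧
      b' = {t ∈ (QuotientGroup.mk' N '' S) \ {1} | orderOf t ≠ 2}.ncard ∧
      (1 : G ⧸ N) ∉ (QuotientGroup.mk' N '' S) \ {1} ∧
      (∀ t ∈ (QuotientGroup.mk' N '' S) \ {1},
        t⁻¹ ∈ (QuotientGroup.mk' N '' S) \ {1}) ∧
      Subgroup.closure ((QuotientGroup.mk' N '' S) \ {1}) = ⊤ ∧
      b' ≤ b ∧ 2 * a' ≤ 2 * a + (b - b') := by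
  set ρ := QuotientGroup.mk' N
  have hsplit : (ρ.foldedNonInvolutions S).ncard +
      ({s ∈ S | orderOf s ≠ 2} \ {s | orderOf (ρ s) = 2}).ncard = b :=
    hb ▸ Set.ncard_inter_add_ncard_sdiff_eq_ncard _ _
  have hb' := (Set.ncard_le_ncard (ρ.nonInvolutions_image_sdiff_one_subset S)).trans
    (Set.ncard_image_le (Set.toFinite _))
  have ha' := (Set.ncard_le_ncard (ρ.involutions_image_sdiff_one_subset S)).trans
    ((Set.ncard_union_le _ _).trans (Nat.add_le_add_right (ha ▸ Set.ncard_image_le) _))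
  have hfolded := ρ.two_mul_ncard_image_foldedNonInvolutions_le S S.toFinite hinv
  refine ⟨_, _, rfl, rfl, by simp, ρ.inv_mem_image_sdiff_one S hinv, ?_, by omega, by omega⟩
  rw [Subgroup.closure_sdiff_one, ← MonoidHom.map_closure, hgen,
    Subgroup.map_top_of_surjective _ (QuotientGroup.mk'_surjective N)]

/-- If `S` is an `(a,b)`-valent Cayley set of a finite group `G` (with `a`
involutions and `b` non-involutions) and `N ⊴ G`, then the image of `S` in
`G/N` with the identity removed is an `(a',b')`-valent Cayley set of `G/N`
with `b' ≤ b` and `2a' ≤ 2a + (b - b')`. -/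
theorem cayley_set_quotient_valency {G : Type*} [Group G] [Fintype G]
    (N : Subgroup G) [N.Normal] (S : Set G)
    (h1 : (1 : G) ∉ S) (hinv : ∀ s ∈ S, s⁻¹ ∈ S)
    (hgen : Subgroup.closure S = ⊤)
    (a b : ℕ)
    (ha : a = {s ∈ S | orderOf s = 2}.ncard)
    (hb : b = {s ∈ S | orderOf s ≠ 2}.ncard) :
    ∃ a' b' : ℕ,
      a' = {t ∈ (QuotientGroup.mk' N '' S) \ {1} | orderOf t = 2}.ncard ∧
      b' = {t ∈ (QuotientGroup.mk' N '' S) \ {1} | orderOf t ≠ 2}.ncard ∧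
      (1 : G ⧸ N) ∉ (QuotientGroup.mk' N '' S) \ {1} ∧
      (∀ t ∈ (QuotientGroup.mk' N '' S) \ {1},
        t⁻¹ ∈ (QuotientGroup.mk' N '' S) \ {1}) ∧
      Subgroup.closure ((QuotientGroup.mk' N '' S) \ {1}) = ⊤ ∧
      b' ≤ b ∧ 2 * a' ≤ 2 * a + (b - b') :=
  cayley_set_quotient_valency_general N S hinv hgen a b ha hb
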